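/- In the greedy set cover algorithm, each element of the universe that is the j-th newly covered element (counting backwards, i.e., when j elements remain uncovered including it) can be assigned a cost at most OPT/j, and summing these costs shows the greedy cover size is at most OPT · H_n. -/

import Mathlib

/-!
Charge each greedy step one unit, split evenly among the elements it newly covers. If at step `t`
exactly `r` elements are still uncovered, the `|C|` sets of an optimal cover split them, so some
set (and hence the greedy choice) covers at least `r / |C|` new ones; each element covered at
step `t` is therefore charged at most `|C| / r`. Ranking the elements by covering time, the
latest first, gives each element a distinct rank `j ≤ r`, so its charge is at most `|C| / j`,
and summing over the distinct ranks gives `T ≤ |C| · H_n`.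
-/

open Finset

theorem Finset.exists_injOn_pos_le_card_filter_le {α β : Type*} [DecidableEq α] [LinearOrder β]
    (s : Finset α) (f : α → β) :
    ∃ j : α → ℕ, Set.InjOn j s ∧ ∀ x ∈ s, 0 < j x ∧ j x ≤ #{y ∈ s | f x ≤ f y} := by
  induction s using Finset.induction_on_min_value f with
  | empty => exact ⟨fun _ => 0, by simp, by simp⟩
  | insert a s ha hmin ih =>
    obtain ⟨j, hinj, hj⟩ := ih
    have hj_le : ∀ x ∈ s, j x ≤ #s := fun x hx => (hj x hx).2.trans (card_filter_le _ _)
    have hupd : ∀ x ∈ s, Function.update j a (#s + 1) x = j x := fun x hx =>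
      Function.update_of_ne (ne_of_mem_of_not_mem hx ha) _ _
    -- `a` has the smallest key, so it takes the new largest rank
    refine ⟨Function.update j a (#s + 1), ?_, fun x hx => ?_⟩
    · intro x hx y hy hxy
      simp only [coe_insert, Set.mem_insert_iff, mem_coe] at hx hy
      rcases hx with rfl | hx <;> rcases hy with rfl | hy
      · rfl
      · rw [hupd y hy, Function.update_self] at hxy
        exact absurd hxy (by have := hj_le y hy; omega)
      · rw [hupd x hx, Function.update_self] at hxy
        exact absurd hxy (by have := hj_le x hx; omega)
      · rw [hupd x hx, hupd y hy] at hxy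
        exact hinj hx hy hxy
    rcases mem_insert.1 hx with rfl | hx
    · rw [filter_true_of_mem fun y hy => ?_, card_insert_of_notMem ha, Function.update_self]
      · exact ⟨Nat.succ_pos _, le_rfl⟩
      · rcases mem_insert.1 hy with rfl | hy
        exacts [le_rfl, hmin y hy]
    · rw [hupd x hx]
      exact ⟨(hj x hx).1,
        (hj x hx).2.trans (card_le_card (filter_subset_filter _ (subset_insert _ _)))⟩

theorem Finset.card_le_card_mul_of_forall_card_inter_le {α : Type*} [DecidableEq α]
    {V : Finset α} {C : Finset (Finset α)} {k : ℕ} (hC : ∀ x ∈ V, ∃ S ∈ C, x ∈ S)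
    (hk : ∀ S ∈ C, #(S ∩ V) ≤ k) : #V ≤ #C * k := by
  have hV : V ⊆ C.biUnion (· ∩ V) := fun x hx => by
    obtain ⟨S, hS, hxS⟩ := hC x hx
    exact mem_biUnion.2 ⟨S, hS, mem_inter.2 ⟨hxS, hx⟩⟩
  exact (card_le_card hV).trans (card_biUnion_le_card_mul _ _ _ hk)

theorem Finset.sum_one_div_card_fiber {α β : Type*} [DecidableEq β] (s : Finset α) (f : α → β) :
    ∑ x ∈ s, (1 : ℝ) / #{y ∈ s | f y = f x} = #(s.image f) := by
  rw [← sum_fiberwise_of_maps_to fun x hx => mem_image_of_mem f hx, card_eq_sum_ones,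
    Nat.cast_sum]
  refine sum_congr rfl fun b hb => ?_
  obtain ⟨x, hx, rfl⟩ := mem_image.1 hb
  have hfiber : #{y ∈ s | f y = f x} ≠ 0 := (card_pos.2 ⟨x, by simpa using hx⟩).ne'
  rw [sum_congr rfl fun y hy => by rw [(mem_filter.1 hy).2], sum_const, nsmul_eq_mul,
    mul_one_div_cancel (by exact_mod_cast hfiber), Nat.cast_one]

theorem Finset.sum_one_div_le_sum_Icc_of_injOn {α : Type*} {s : Finset α} {j : α → ℕ} {n : ℕ}
    (hj : Set.InjOn j s) (hmaps : ∀ x ∈ s, j x ∈ Icc 1 n) :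
    ∑ x ∈ s, (1 : ℝ) / j x ≤ ∑ k ∈ Icc 1 n, (1 : ℝ) / k := by
  rw [← sum_image (f := fun k : ℕ => (1 : ℝ) / k) hj]
  exact sum_le_sum_of_subset_of_nonneg (image_subset_iff.2 hmaps) fun _ _ _ => by positivity

section FirstCoverTime

variable {α : Type*} [DecidableEq α] {g : ℕ → Finset α}

-- `0` for an element that is never covered
open Classical in
noncomputable def firstCoverTime (g : ℕ → Finset α) (x : α) : ℕ :=
  if h : ∃ t, x ∈ g t then Nat.find h else 0

theorem le_firstCoverTime_iff {x : α} {T : ℕ} (hx : x ∈ (range T).biUnion g) (s : ℕ) :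
    s ≤ firstCoverTime g x ↔ x ∉ (range s).biUnion g := by
  obtain ⟨t, -, ht⟩ := mem_biUnion.1 hx
  simp [firstCoverTime, dif_pos (⟨t, ht⟩ : ∃ t, x ∈ g t), Nat.le_find_iff, mem_biUnion]

theorem firstCoverTime_lt {x : α} {T : ℕ} (hx : x ∈ (range T).biUnion g) :
    firstCoverTime g x < T :=
  not_le.1 fun hT => (le_firstCoverTime_iff hx T).1 hT hx

variable {U : Finset α} {T : ℕ}

theorem filter_le_firstCoverTime (hU : U ⊆ (range T).biUnion g) (s : ℕ) :
    {x ∈ U | s ≤ firstCoverTime g x} = U \ (range s).biUnion g := by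
  ext x
  simp only [mem_filter, mem_sdiff]
  exact and_congr_right fun hx => le_firstCoverTime_iff (hU hx) s

theorem filter_firstCoverTime_eq (hU : U ⊆ (range T).biUnion g) (t : ℕ) :
    {x ∈ U | firstCoverTime g x = t} = (g t ∩ U) \ (range t).biUnion g := by
  ext x
  simp only [mem_filter, mem_sdiff, mem_inter]
  by_cases hx : x ∈ U
  · have hiff : firstCoverTime g x = t ↔
        t ≤ firstCoverTime g x ∧ ¬t + 1 ≤ firstCoverTime g x := by omega
    simp only [le_firstCoverTime_iff (hU hx), range_add_one, biUnion_insert, mem_union] at hiff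
    simp only [hx, hiff, true_and, and_true]
    tauto
  · simp [hx]

end FirstCoverTime

section Greedy

variable {α : Type*} [DecidableEq α] {U : Finset α} {F C : Finset (Finset α)} {g : ℕ → Finset α}
  {T : ℕ}

theorem card_sdiff_le_card_mul_card_of_greedy
    (hgreedy : ∀ t, ∀ S ∈ F,
      #((S ∩ U) \ (range t).biUnion g) ≤ #((g t ∩ U) \ (range t).biUnion g))
    (hCF : C ⊆ F) (hC : ∀ x ∈ U, ∃ S ∈ C, x ∈ S) (t : ℕ) :
    #(U \ (range t).biUnion g) ≤ #C * #((g t ∩ U) \ (range t).biUnion g) :=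
  card_le_card_mul_of_forall_card_inter_le (fun x hx => hC x (mem_sdiff.1 hx).1)
    fun S hS => by rw [← inter_sdiff_assoc]; exact hgreedy t S (hCF hS)

theorem image_firstCoverTime_eq_range
    (hgreedy : ∀ t, ∀ S ∈ F,
      #((S ∩ U) \ (range t).biUnion g) ≤ #((g t ∩ U) \ (range t).biUnion g))
    (hT : U ⊆ (range T).biUnion g) (hTmin : ∀ t < T, ¬ U ⊆ (range t).biUnion g)
    (hCF : C ⊆ F) (hC : ∀ x ∈ U, ∃ S ∈ C, x ∈ S) :
    U.image (firstCoverTime g) = range T := by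
  ext t
  simp only [mem_image, mem_range]
  refine ⟨fun ⟨x, hx, hxt⟩ => hxt ▸ firstCoverTime_lt (hT hx), fun ht => ?_⟩
  obtain ⟨x, hxU, hx⟩ := not_subset.1 (hTmin t ht)
  have huncovered : 0 < #(U \ (range t).biUnion g) := card_pos.2 ⟨x, mem_sdiff.2 ⟨hxU, hx⟩⟩
  obtain ⟨y, hy⟩ := card_pos.1 <| Nat.pos_of_mul_pos_left <|
    huncovered.trans_le (card_sdiff_le_card_mul_card_of_greedy hgreedy hCF hC t)
  rw [← filter_firstCoverTime_eq hT] at hy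
  exact ⟨y, mem_filter.1 hy⟩

end Greedy

theorem greedy_set_cover_charging_general {α : Type*} [DecidableEq α]
    (U : Finset α) (F : Finset (Finset α))
    (g : ℕ → Finset α)
    (hgreedy : ∀ t, ∀ S ∈ F,
      ((S ∩ U) \ (Finset.range t).biUnion g).card ≤
        ((g t ∩ U) \ (Finset.range t).biUnion g).card)
    (T : ℕ) (hT : U ⊆ (Finset.range T).biUnion g)
    (hTmin : ∀ t < T, ¬ U ⊆ (Finset.range t).biUnion g)
    (C : Finset (Finset α)) (hCF : C ⊆ F) (hC : ∀ x ∈ U, ∃ S ∈ C, x ∈ S) :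
    ∃ (cost : α → ℝ) (j : α → ℕ),
      (T : ℝ) ≤ ∑ x ∈ U, cost x ∧
      Set.InjOn j ↑U ∧
      (∀ x ∈ U, 1 ≤ j x ∧ j x ≤ U.card ∧ cost x ≤ (C.card : ℝ) / j x) ∧
      (T : ℝ) ≤ (C.card : ℝ) * ∑ k ∈ Finset.Icc 1 U.card, (1 : ℝ) / k := by
  obtain ⟨j, hinj, hj⟩ := exists_injOn_pos_le_card_filter_le U (firstCoverTime g)
  simp only [filter_le_firstCoverTime hT] at hj
  have hj_mem : ∀ x ∈ U, j x ∈ Icc 1 #U := fun x hx =>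
    mem_Icc.2 ⟨(hj x hx).1, (hj x hx).2.trans (card_le_card sdiff_subset)⟩
  set cost : α → ℝ := fun x => 1 / #{y ∈ U | firstCoverTime g y = firstCoverTime g x}
  have hsum : ∑ x ∈ U, cost x = T := by
    rw [sum_one_div_card_fiber, image_firstCoverTime_eq_range hgreedy hT hTmin hCF hC, card_range]
  have hcost : ∀ x ∈ U, cost x ≤ #C / j x := by
    intro x hx
    have hfiber : 0 < #{y ∈ U | firstCoverTime g y = firstCoverTime g x} :=
      card_pos.2 ⟨x, mem_filter.2 ⟨hx, rfl⟩⟩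
    have hj_le : j x ≤ #C * #{y ∈ U | firstCoverTime g y = firstCoverTime g x} := by
      rw [filter_firstCoverTime_eq hT]
      exact (hj x hx).2.trans (card_sdiff_le_card_mul_card_of_greedy hgreedy hCF hC _)
    rw [div_le_div_iff₀ (by exact_mod_cast hfiber) (by exact_mod_cast (hj x hx).1), one_mul]
    exact_mod_cast hj_le
  refine ⟨cost, j, hsum.ge, hinj, fun x hx =>
    ⟨(mem_Icc.1 (hj_mem x hx)).1, (mem_Icc.1 (hj_mem x hx)).2, hcost x hx⟩, ?_⟩
  calc (T : ℝ) = ∑ x ∈ U, cost x := hsum.symm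
    _ ≤ ∑ x ∈ U, (#C : ℝ) / j x := sum_le_sum hcost
    _ = #C * ∑ x ∈ U, (1 : ℝ) / j x := by simp only [mul_sum, mul_one_div]
    _ ≤ #C * ∑ k ∈ Icc 1 #U, (1 : ℝ) / k :=
      mul_le_mul_of_nonneg_left (sum_one_div_le_sum_Icc_of_injOn hinj hj_mem) (by positivity)

/-- In greedy set cover, there is a cost assignment on the universe in which
the `j`-th newly covered element counted backwards (i.e. with `j` elements still uncovered
including it) receives cost at most `OPT / j`; the costs sum to the number of greedy steps,
hence the greedy cover size is at most `OPT · H_n`. -/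
theorem greedy_set_cover_charging {α : Type*} [DecidableEq α]
    (U : Finset α) (F : Finset (Finset α))
    (hUcov : ∀ x ∈ U, ∃ S ∈ F, x ∈ S)
    (g : ℕ → Finset α) (hg : ∀ t, g t ∈ F)
    (hgreedy : ∀ t, ∀ S ∈ F,
      ((S ∩ U) \ (Finset.range t).biUnion g).card ≤
        ((g t ∩ U) \ (Finset.range t).biUnion g).card)
    (T : ℕ) (hT : U ⊆ (Finset.range T).biUnion g)
    (hTmin : ∀ t < T, ¬ U ⊆ (Finset.range t).biUnion g)
    (C : Finset (Finset α)) (hCF : C ⊆ F) (hC : ∀ x ∈ U, ∃ S ∈ C, x ∈ S) :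
    ∃ (cost : α → ℝ) (j : α → ℕ),
      (T : ℝ) ≤ ∑ x ∈ U, cost x ∧
      Set.InjOn j ↑U ∧
      (∀ x ∈ U, 1 ≤ j x ∧ j x ≤ U.card ∧ cost x ≤ (C.card : ℝ) / j x) ∧
      (T : ℝ) ≤ (C.card : ℝ) * ∑ k ∈ Finset.Icc 1 U.card, (1 : ℝ) / k :=
  greedy_set_cover_charging_general U F g hgreedy T hT hTmin C hCF hC
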